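/- arXiv:2501.00472 — 2 statements merged into one kernel-verified Lean document; each statement's English description precedes it below -/
import Mathlib

section
/- Let L ≥ 1 be an integer and N an even integer with 2 ≤ N ≤ L+1. If D is a subset of {0,1,...,L} with |D| = N and χ(D) = χ(K_N^L), then D = K_N^L; that is, the clustered array is the unique maximizer of the spatial variance among N-element subsets of {0,1,...,L}. -/
/-!
The spatial variance of `D` is the least mean square deviation of `D` from a point, so
`χ(D) ≤ (1/N) ∑_{d ∈ D} (d - L/2)²`, while `K_N^L` is symmetric about `L/2` and therefore
attains this bound with equality. Moreover every point of `{0, …, L}` outside `K_N^L` is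
strictly closer to `L/2` than every point of `K_N^L`, so exchanging the points of `D \ K_N^L`
for those of `K_N^L \ D` strictly increases `∑ (d - L/2)²` unless `D = K_N^L`.
-/

/-- Spatial mean of a finite set of integer sensor positions. -/
noncomputable def spatialMean (D : Finset ℤ) : ℝ :=
  (∑ d ∈ D, (d : ℝ)) / D.card

/-- Spatial variance of a finite set of integer sensor positions. -/
noncomputable def spatialVar (D : Finset ℤ) : ℝ :=
  (∑ d ∈ D, ((d : ℝ) - spatialMean D) ^ 2) / D.card

/-- The `N`-sensor uniform linear array `U_N = {0, 1, ..., N-1}` as a set of integers. -/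
noncomputable def ULA (N : ℕ) : Finset ℤ := Finset.Ico (0 : ℤ) (N : ℤ)

/-- The clustered array `K_N^L = U_{N/2} ∪ (L - U_{N/2})`. -/
noncomputable def clusteredArray (N L : ℕ) : Finset ℤ :=
  ULA (N / 2) ∪ (ULA (N / 2)).image (fun u => (L : ℤ) - u)

open Finset

namespace Finset

variable {ι M : Type*} [DecidableEq ι] [AddCommMonoid M] [LinearOrder M]
  [IsOrderedCancelAddMonoid M]

theorem sum_lt_sum_of_card_eq_of_forall_sdiff_lt {s t : Finset ι} {f : ι → M}
    (hcard : #s = #t) (hne : s ≠ t) (hf : ∀ x ∈ s \ t, ∀ y ∈ t \ s, f x < f y) :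
    ∑ x ∈ s, f x < ∑ x ∈ t, f x := by
  have hst : (s \ t).Nonempty :=
    sdiff_nonempty.2 fun hsub => hne (eq_of_subset_of_card_le hsub hcard.ge)
  have hts : (t \ s).Nonempty :=
    sdiff_nonempty.2 fun hsub => hne (eq_of_subset_of_card_le hsub hcard.le).symm
  obtain ⟨x₀, hx₀, hmax⟩ := exists_max_image (s \ t) f hst
  calc ∑ x ∈ s, f x = ∑ x ∈ s ∩ t, f x + ∑ x ∈ s \ t, f x :=
        (sum_inter_add_sum_sdiff s t f).symm
    _ ≤ ∑ x ∈ s ∩ t, f x + #(s \ t) • f x₀ := by grw [sum_le_card_nsmul _ _ _ hmax]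
    _ = ∑ x ∈ t ∩ s, f x + ∑ _ ∈ t \ s, f x₀ := by
      rw [inter_comm, card_sdiff_comm hcard, sum_const]
    _ < ∑ x ∈ t ∩ s, f x + ∑ x ∈ t \ s, f x := by
      gcongr with y hy
      exact hf x₀ hx₀ y hy
    _ = ∑ x ∈ t, f x := sum_inter_add_sum_sdiff t s f

end Finset

theorem sum_sub_spatialMean (D : Finset ℤ) : ∑ d ∈ D, ((d : ℝ) - spatialMean D) = 0 := by
  rcases D.eq_empty_or_nonempty with rfl | hD
  · simp
  have : (#D : ℝ) ≠ 0 := by exact_mod_cast hD.card_pos.ne'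
  rw [sum_sub_distrib, sum_const, nsmul_eq_mul, spatialMean, mul_div_cancel₀ _ this, sub_self]

theorem sum_sq_sub_eq_sum_sq_sub_spatialMean_add (D : Finset ℤ) (c : ℝ) :
    ∑ d ∈ D, ((d : ℝ) - c) ^ 2
      = ∑ d ∈ D, ((d : ℝ) - spatialMean D) ^ 2 + #D * (spatialMean D - c) ^ 2 := by
  have h := sum_sub_spatialMean D
  calc ∑ d ∈ D, ((d : ℝ) - c) ^ 2
      = ∑ d ∈ D, (((d : ℝ) - spatialMean D) ^ 2
          + 2 * (spatialMean D - c) * ((d : ℝ) - spatialMean D) + (spatialMean D - c) ^ 2) :=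
        sum_congr rfl fun _ _ => by ring
    _ = _ := by rw [sum_add_distrib, sum_add_distrib, ← mul_sum, h, sum_const, nsmul_eq_mul]; ring

theorem spatialVar_le_sum_sq_sub_div (D : Finset ℤ) (c : ℝ) :
    spatialVar D ≤ (∑ d ∈ D, ((d : ℝ) - c) ^ 2) / #D := by
  rw [spatialVar, sum_sq_sub_eq_sum_sq_sub_spatialMean_add D c]
  gcongr
  exact le_add_of_nonneg_right (by positivity)

theorem spatialMean_eq_half_of_sub_mem (D : Finset ℤ) (c : ℤ) (hD : D.Nonempty)
    (hsymm : ∀ d ∈ D, c - d ∈ D) : spatialMean D = c / 2 := by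
  have hreflect : ∑ d ∈ D, ((c : ℝ) - d) = ∑ d ∈ D, (d : ℝ) :=
    sum_nbij' (c - ·) (c - ·) hsymm hsymm (fun _ _ => sub_sub_cancel _ _)
      (fun _ _ => sub_sub_cancel _ _) (fun _ _ => by push_cast; ring)
  rw [sum_sub_distrib, sum_const, nsmul_eq_mul] at hreflect
  have : (#D : ℝ) ≠ 0 := by exact_mod_cast hD.card_pos.ne'
  rw [spatialMean]
  field_simp
  linarith

section clusteredArray

variable {N L : ℕ}

theorem mem_clusteredArray {d : ℤ} :
    d ∈ clusteredArray N L ↔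
      (0 ≤ d ∧ d < (N / 2 : ℕ)) ∨ (L - (N / 2 : ℕ) < d ∧ d ≤ L) := by
  simp only [clusteredArray, ULA, mem_union, mem_Ico, mem_image]
  constructor
  · rintro (hlow | ⟨u, hu, rfl⟩)
    · exact .inl hlow
    · right; omega
  · rintro (hlow | hhigh)
    · exact .inl hlow
    · exact .inr ⟨L - d, by omega, by omega⟩

theorem sub_mem_clusteredArray {d : ℤ} (hd : d ∈ clusteredArray N L) :
    (L : ℤ) - d ∈ clusteredArray N L := by
  rw [mem_clusteredArray] at hd ⊢
  omega

theorem card_clusteredArray (hNeven : Even N) (hNL : N ≤ L + 1) :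
    #(clusteredArray N L) = N := by
  obtain ⟨r, rfl⟩ := hNeven
  have hr : (r + r) / 2 = r := by omega
  have hdisj : Disjoint (ULA r) ((ULA r).image (fun u => (L : ℤ) - u)) := by
    simp only [disjoint_left, ULA, mem_Ico, mem_image]
    rintro _ hlow ⟨u, hu, rfl⟩
    omega
  rw [clusteredArray, hr, card_union_of_disjoint hdisj,
    card_image_of_injective _ sub_right_injective, ULA, Int.card_Ico]
  omega

theorem sq_sub_half_lt_of_mem_clusteredArray {d k : ℤ} (hd : d ∈ ULA (L + 1))
    (hdK : d ∉ clusteredArray N L) (hk : k ∈ clusteredArray N L) :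
    ((d : ℝ) - L / 2) ^ 2 < ((k : ℝ) - L / 2) ^ 2 := by
  rw [mem_clusteredArray] at hdK hk
  simp only [ULA, mem_Ico] at hd
  have hsq : ((k : ℝ) - L / 2) ^ 2 - ((d : ℝ) - L / 2) ^ 2 = ((k : ℝ) - d) * (k + d - L) := by
    ring
  rw [← sub_pos, hsq]
  rcases hk with hlow | hhigh
  · have h₁ : (k : ℝ) < d := by exact_mod_cast (by omega : k < d)
    have h₂ : (k : ℝ) + d < L := by exact_mod_cast (by omega : k + d < L)
    nlinarith
  · have h₁ : (d : ℝ) < k := by exact_mod_cast (by omega : d < k)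
    have h₂ : (L : ℝ) < k + d := by exact_mod_cast (by omega : L < k + d)
    nlinarith

end clusteredArray

theorem clustered_array_unique_maximizer_general
    (L N : ℕ) (hNeven : Even N) (hN2 : 2 ≤ N) (hNL : N ≤ L + 1)
    (D : Finset ℤ) (hD : D ⊆ ULA (L + 1)) (hcard : D.card = N)
    (hvar : spatialVar D = spatialVar (clusteredArray N L)) :
    D = clusteredArray N L := by
  set K := clusteredArray N L
  by_contra hne
  have hK : #K = N := card_clusteredArray hNeven hNL
  have hN : (0 : ℝ) < N := by exact_mod_cast (by omega : 0 < N)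
  have hmean : spatialMean K = L / 2 := by
    rw [spatialMean_eq_half_of_sub_mem K L (card_pos.1 (by omega))
      fun _ => sub_mem_clusteredArray, Int.cast_natCast]
  have hsum : ∑ d ∈ D, ((d : ℝ) - L / 2) ^ 2 < ∑ k ∈ K, ((k : ℝ) - L / 2) ^ 2 :=
    sum_lt_sum_of_card_eq_of_forall_sdiff_lt (hcard.trans hK.symm) hne fun d hd k hk =>
      sq_sub_half_lt_of_mem_clusteredArray (hD (mem_sdiff.1 hd).1) (mem_sdiff.1 hd).2
        (mem_sdiff.1 hk).1
  have hlt : spatialVar D < spatialVar K :=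
    calc spatialVar D ≤ (∑ d ∈ D, ((d : ℝ) - L / 2) ^ 2) / N :=
          hcard ▸ spatialVar_le_sum_sq_sub_div D (L / 2)
      _ < (∑ k ∈ K, ((k : ℝ) - L / 2) ^ 2) / N := div_lt_div_of_pos_right hsum hN
      _ = spatialVar K := by rw [spatialVar, hmean, hK]
  exact hlt.ne hvar

/-- The clustered array is the unique maximizer of the spatial variance
among `N`-element subsets of `{0, 1, ..., L}`. -/
theorem clustered_array_unique_maximizer
    (L N : ℕ) (hL : 1 ≤ L) (hNeven : Even N) (hN2 : 2 ≤ N) (hNL : N ≤ L + 1)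
    (D : Finset ℤ) (hD : D ⊆ ULA (L + 1)) (hcard : D.card = N)
    (hvar : spatialVar D = spatialVar (clusteredArray N L)) :
    D = clusteredArray N L :=
  clustered_array_unique_maximizer_general L N hNeven hN2 hNL D hD hcard hvar
end

section
/- Let N_t ≥ 1 be an integer, N_r ≥ 2 an even integer, and set L = (N_t + 1)·N_r/2 − 1. Then χ(K_{N_r}^L) > χ((N_r/2)·U_{N_t}); that is, the spatial variance of the clustered receive array strictly exceeds the spatial variance of the dilated-ULA transmit array, so transmit beamforming remains the optimal waveform for this transmit–receive pair. -/
/-!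
Write `M = N_r / 2`. The clustered array is the disjoint union of the two clusters `U_M` and
`L - U_M`, and the variance of a union of two disjoint sets of equal size is the mean of their
variances plus the square of half the distance between their means. Both clusters have the
variance `(M² - 1)/12` of `U_M`, and their means `(M - 1)/2` and `L - (M - 1)/2` are at least
`N_t·M` apart, so `χ(K) ≥ N_t² M² / 4`. Variance scales quadratically under dilation, so the
dilated ULA has the smaller variance `M² (N_t² - 1)/12`.
-/

open Finset

lemma sum_range_natCast_real (n : ℕ) : ∑ i ∈ range n, (i : ℝ) = n * (n - 1) / 2 := by
  induction n with
  | zero => simp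
  | succ k ih => rw [sum_range_succ, ih]; push_cast; ring

lemma sum_range_natCast_sq_real (n : ℕ) :
    ∑ i ∈ range n, (i : ℝ) ^ 2 = n * (n - 1) * (2 * n - 1) / 6 := by
  induction n with
  | zero => simp
  | succ k ih => rw [sum_range_succ, ih]; push_cast; ring

section SpatialStatistics

variable {D A B : Finset ℤ}

lemma sum_eq_card_mul_spatialMean (D : Finset ℤ) :
    ∑ d ∈ D, (d : ℝ) = #D * spatialMean D := by
  rcases D.eq_empty_or_nonempty with rfl | hD
  · simp
  · rw [spatialMean, mul_div_cancel₀ _ (by positivity)]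

lemma sum_sq_eq_card_mul_spatialVar_add_sq (D : Finset ℤ) :
    ∑ d ∈ D, (d : ℝ) ^ 2 = #D * (spatialVar D + spatialMean D ^ 2) := by
  rcases D.eq_empty_or_nonempty with rfl | hD
  · simp
  have hcard : (#D : ℝ) ≠ 0 := by positivity
  have hsq : ∑ d ∈ D, ((d : ℝ) - spatialMean D) ^ 2
      = ∑ d ∈ D, (d : ℝ) ^ 2 - 2 * spatialMean D * ∑ d ∈ D, (d : ℝ)
        + #D * spatialMean D ^ 2 := by
    simp only [sub_sq, sum_add_distrib, sum_sub_distrib, mul_sum, sum_const, nsmul_eq_mul]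
    congr 2; refine sum_congr rfl fun d _ => by ring
  rw [spatialVar, mul_add, mul_div_cancel₀ _ hcard, hsq, sum_eq_card_mul_spatialMean]
  ring

lemma spatialVar_eq_sub (hD : D.Nonempty) :
    spatialVar D = (∑ d ∈ D, (d : ℝ) ^ 2) / #D - spatialMean D ^ 2 := by
  rw [sum_sq_eq_card_mul_spatialVar_add_sq, mul_div_cancel_left₀ _ (by positivity)]
  ring

lemma injective_of_cast_eq_affine {g : ℤ → ℤ} {a b : ℝ} (ha : a ≠ 0)
    (hg : ∀ d, (g d : ℝ) = a * d + b) : Function.Injective g := fun x y h => by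
  have h' := congrArg (fun z : ℤ => (z : ℝ)) h
  simp only [hg] at h'
  exact_mod_cast mul_left_cancel₀ ha (add_right_cancel h')

lemma spatialMean_image_affine (hD : D.Nonempty) {g : ℤ → ℤ} {a b : ℝ} (ha : a ≠ 0)
    (hg : ∀ d, (g d : ℝ) = a * d + b) :
    spatialMean (D.image g) = a * spatialMean D + b := by
  have hinj := injective_of_cast_eq_affine ha hg
  rw [spatialMean, card_image_of_injective _ hinj, sum_image fun x _ y _ h => hinj h]
  simp only [hg, sum_add_distrib, ← mul_sum, sum_const, nsmul_eq_mul,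
    sum_eq_card_mul_spatialMean D]
  field_simp

lemma spatialVar_image_affine (hD : D.Nonempty) {g : ℤ → ℤ} {a b : ℝ} (ha : a ≠ 0)
    (hg : ∀ d, (g d : ℝ) = a * d + b) :
    spatialVar (D.image g) = a ^ 2 * spatialVar D := by
  have hinj := injective_of_cast_eq_affine ha hg
  rw [spatialVar, spatialVar, card_image_of_injective _ hinj,
    sum_image fun x _ y _ h => hinj h, spatialMean_image_affine hD ha hg, ← mul_div_assoc,
    mul_sum]
  congr 1
  refine sum_congr rfl fun d _ => ?_
  rw [hg]; ring

lemma spatialMean_union (hAB : Disjoint A B) (hcard : #A = #B) (hA : A.Nonempty) :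
    spatialMean (A ∪ B) = (spatialMean A + spatialMean B) / 2 := by
  have hA' : (#A : ℝ) ≠ 0 := by positivity
  rw [spatialMean, sum_union hAB, card_union_of_disjoint hAB, sum_eq_card_mul_spatialMean A,
    sum_eq_card_mul_spatialMean B, ← hcard]
  push_cast
  field_simp
  ring

lemma spatialVar_union (hAB : Disjoint A B) (hcard : #A = #B) (hA : A.Nonempty) :
    spatialVar (A ∪ B) = (spatialVar A + spatialVar B) / 2
      + ((spatialMean A - spatialMean B) / 2) ^ 2 := by
  have hA' : (#A : ℝ) ≠ 0 := by positivity
  rw [spatialVar_eq_sub (hA.mono subset_union_left), spatialMean_union hAB hcard hA,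
    sum_union hAB, card_union_of_disjoint hAB, sum_sq_eq_card_mul_spatialVar_add_sq A,
    sum_sq_eq_card_mul_spatialVar_add_sq B, ← hcard]
  push_cast
  field_simp
  ring

end SpatialStatistics

lemma sum_ULA (n : ℕ) (f : ℤ → ℝ) : ∑ d ∈ ULA n, f d = ∑ i ∈ range n, f i := by
  rw [ULA, Int.Ico_eq_finset_map, sum_map]
  simp

lemma card_ULA (n : ℕ) : #(ULA n) = n := by
  simp [ULA]

lemma ULA_nonempty {n : ℕ} (hn : n ≠ 0) : (ULA n).Nonempty := by
  rw [← card_pos, card_ULA]; omega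

lemma spatialMean_ULA {n : ℕ} (hn : n ≠ 0) : spatialMean (ULA n) = (n - 1) / 2 := by
  rw [spatialMean, sum_ULA n (fun d => (d : ℝ)), card_ULA]
  simp only [Int.cast_natCast, sum_range_natCast_real]
  field_simp

lemma spatialVar_ULA {n : ℕ} (hn : n ≠ 0) : spatialVar (ULA n) = (n ^ 2 - 1) / 12 := by
  rw [spatialVar_eq_sub (ULA_nonempty hn), spatialMean_ULA hn, sum_ULA n (fun d => (d : ℝ) ^ 2),
    card_ULA]
  simp only [Int.cast_natCast, sum_range_natCast_sq_real]
  field_simp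
  ring

lemma disjoint_ULA_image_sub {M L : ℕ} (h : 2 * M ≤ L + 1) :
    Disjoint (ULA M) ((ULA M).image fun u => (L : ℤ) - u) := by
  simp only [disjoint_left, mem_image, ULA, mem_Ico]
  rintro x hx ⟨u, hu, rfl⟩
  omega

lemma spatialVar_clusteredArray {N L : ℕ} (hN : 2 ≤ N) (hNL : N ≤ L + 1) :
    spatialVar (clusteredArray N L)
      = (((N / 2 : ℕ) : ℝ) ^ 2 - 1) / 12 + (((L : ℝ) + 1 - (N / 2 : ℕ)) / 2) ^ 2 := by
  have hM : N / 2 ≠ 0 := by omega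
  have hrefl : ∀ u : ℤ, (((L : ℤ) - u : ℤ) : ℝ) = -1 * u + L := fun u => by
    push_cast; ring
  rw [clusteredArray, spatialVar_union (disjoint_ULA_image_sub (by omega))
    (card_image_of_injective _ (injective_of_cast_eq_affine (by norm_num) hrefl)).symm
      (ULA_nonempty hM),
    spatialVar_image_affine (ULA_nonempty hM) (by norm_num) hrefl,
    spatialMean_image_affine (ULA_nonempty hM) (by norm_num) hrefl, spatialVar_ULA hM,
    spatialMean_ULA hM]
  ring

theorem clustered_rx_variance_gt_dilated_ULA_tx_general
    (Nt Nr : ℕ) (hNt : 1 ≤ Nt) (hNr : 2 ≤ Nr)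
    (L : ℕ) (hL : L = (Nt + 1) * Nr / 2 - 1) :
    spatialVar (clusteredArray Nr L)
      > spatialVar ((ULA Nt).image (fun m => ((Nr : ℤ) / 2) * m)) := by
  have hNrL : Nr ≤ L + 1 := by
    have : 2 * Nr / 2 ≤ (Nt + 1) * Nr / 2 := Nat.div_le_div_right (by gcongr; omega)
    omega
  have hspan : (Nt + 1) * (Nr / 2) ≤ L + 1 := by
    have := Nat.mul_div_le_mul_div_assoc (Nt + 1) Nr 2
    omega
  have hdilate : ∀ m : ℤ, ((((Nr : ℤ) / 2) * m : ℤ) : ℝ) = ((Nr / 2 : ℕ) : ℝ) * m + 0 := by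
    intro m
    rw [add_zero, Int.cast_mul, show (Nr : ℤ) / 2 = ((Nr / 2 : ℕ) : ℤ) by omega,
      Int.cast_natCast]
  rw [spatialVar_clusteredArray hNr hNrL,
    spatialVar_image_affine (ULA_nonempty (by omega))
      (by exact_mod_cast (by omega : Nr / 2 ≠ 0)) hdilate,
    spatialVar_ULA (by omega)]
  have hM : (1 : ℝ) ≤ (Nr / 2 : ℕ) := by exact_mod_cast (by omega : 1 ≤ Nr / 2)
  have hspan' : ((Nt : ℝ) + 1) * (Nr / 2 : ℕ) ≤ L + 1 := by exact_mod_cast hspan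
  set M : ℝ := ((Nr / 2 : ℕ) : ℝ)
  have hgap_sq : (Nt * M) ^ 2 ≤ (L + 1 - M) ^ 2 :=
    pow_le_pow_left₀ (by positivity) (by linarith) 2
  nlinarith [mul_pos (by positivity : (0 : ℝ) < M ^ 2)
    (by positivity : (0 : ℝ) < (Nt : ℝ) ^ 2 + 1)]

/-- With `L = (N_t + 1)·N_r/2 − 1`, the spatial variance of the
clustered receive array strictly exceeds that of the dilated-ULA transmit array,
so transmit beamforming remains the CRB-optimal waveform for this pair. -/
theorem clustered_rx_variance_gt_dilated_ULA_tx
    (Nt Nr : ℕ) (hNt : 1 ≤ Nt) (hNr : 2 ≤ Nr) (hNrEven : Even Nr)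
    (L : ℕ) (hL : L = (Nt + 1) * Nr / 2 - 1) :
    spatialVar (clusteredArray Nr L)
      > spatialVar ((ULA Nt).image (fun m => ((Nr : ℤ) / 2) * m)) :=
  clustered_rx_variance_gt_dilated_ULA_tx_general Nt Nr hNt hNr L hL
end
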